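/- For every positive integer d, Σ_{d₁+d₂+d₃=d, dᵢ≥1} σ₁(d₁)σ₁(d₂)σ₁(d₃) = (d²/8 - d/16 + 1/192)·σ₁(d) + (-5d/32 + 5/96)·σ₃(d) + (7/192)·σ₅(d). -/

import Mathlib

/-!
Liouville's elementary method. The convolution `∑_{m<n} ∑_{a ∣ m} ∑_{b ∣ n-m} f(a, b)` is a sum
over the quadruples `(a, b, x, y)` of positive integers with `a x + b y = n`; split such sums
according to the sign of `a - b`. The part with `b < a` carries the involution
`(a, b, x, y) ↦ (x + y, x, b, a - b)`, and the symmetry `(a, b, x, y) ↦ (x, y, a, b)` makes the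
sums of `h(a, b)` and of `h(x, y)` equal. Comparing the two leaves only the diagonal terms
`a = b`, which are divisor sums, whenever
`f(a, b) + f(b, a) = h(a, b) + h(b, a) - h(b, a - b) - h(a - b, b)`.

Since `a² + ab + b²` becomes `a² - ab + b²` under `(a, b) ↦ (b, a - b)`, the choices
`h = (a² + ab + b²) / 2` and `h = (a² + ab + b²)² / 8` evaluate `σ₁ ∗ σ₁` (Besge) and `σ₁ ∗ σ₃`.
The triple convolution is `σ₁ ∗ (σ₁ ∗ σ₁)`, and reflecting `m ↦ n - m` turns the weight `n - m`
that Besge's formula brings in into `n / 2`.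
-/

/-- `σₖ(n) = ∑_{a ∣ n} aᵏ`, as a rational number. -/
def sigmaQ (k n : ℕ) : ℚ := ∑ a ∈ n.divisors, (a : ℚ) ^ k

open Finset

def quadReps (n : ℕ) : Finset (ℕ × ℕ × ℕ × ℕ) :=
  (Icc 1 n ×ˢ Icc 1 n ×ˢ Icc 1 n ×ˢ Icc 1 n).filter fun ⟨a, b, x, y⟩ => a * x + b * y = n

theorem mem_quadReps {n a b x y : ℕ} :
    (a, b, x, y) ∈ quadReps n ↔ 0 < a ∧ 0 < b ∧ 0 < x ∧ 0 < y ∧ a * x + b * y = n := by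
  simp only [quadReps, mem_filter, mem_product, mem_Icc]
  constructor
  · rintro ⟨⟨⟨ha, -⟩, ⟨hb, -⟩, ⟨hx, -⟩, ⟨hy, -⟩⟩, h⟩
    exact ⟨ha, hb, hx, hy, h⟩
  · rintro ⟨ha, hb, hx, hy, h⟩
    refine ⟨⟨⟨ha, ?_⟩, ⟨hb, ?_⟩, ⟨hx, ?_⟩, ⟨hy, ?_⟩⟩, h⟩ <;> nlinarith

def quadRepsGt (n : ℕ) : Finset (ℕ × ℕ × ℕ × ℕ) :=
  (quadReps n).filter fun ⟨a, b, _, _⟩ => b < a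

theorem mem_quadRepsGt {n a b x y : ℕ} :
    (a, b, x, y) ∈ quadRepsGt n ↔ (0 < a ∧ 0 < b ∧ 0 < x ∧ 0 < y ∧ a * x + b * y = n) ∧ b < a := by
  rw [quadRepsGt, mem_filter, mem_quadReps]

section QuadReps

variable {M : Type*} [AddCommMonoid M] (n : ℕ)

theorem sum_quadReps_swap (φ : ℕ → ℕ → ℕ → ℕ → M) :
    ∑ ⟨a, b, x, y⟩ ∈ quadReps n, φ x y a b = ∑ ⟨a, b, x, y⟩ ∈ quadReps n, φ a b x y := by
  refine sum_nbij' (fun ⟨a, b, x, y⟩ => (x, y, a, b)) (fun ⟨a, b, x, y⟩ => (x, y, a, b))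
    ?_ ?_ (fun _ _ => rfl) (fun _ _ => rfl) (fun _ _ => rfl) <;>
  · rintro ⟨a, b, x, y⟩ h
    obtain ⟨ha, hb, hx, hy, h⟩ := mem_quadReps.1 h
    exact mem_quadReps.2 ⟨hx, hy, ha, hb, by linear_combination h⟩

theorem sum_quadReps_filter_lt (φ : ℕ → ℕ → ℕ → ℕ → M) :
    ∑ ⟨a, b, x, y⟩ ∈ (quadReps n).filter (fun p => p.1 < p.2.1), φ a b x y =
      ∑ ⟨a, b, x, y⟩ ∈ quadRepsGt n, φ b a y x := by
  refine sum_nbij' (fun ⟨a, b, x, y⟩ => (b, a, y, x)) (fun ⟨a, b, x, y⟩ => (b, a, y, x))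
    ?_ ?_ (fun _ _ => rfl) (fun _ _ => rfl) (fun _ _ => rfl) <;>
  · rintro ⟨a, b, x, y⟩ h
    simp only [mem_filter, mem_quadRepsGt, mem_quadReps] at h ⊢
    obtain ⟨⟨ha, hb, hx, hy, h⟩, hlt⟩ := h
    exact ⟨⟨hb, ha, hy, hx, by linear_combination h⟩, hlt⟩

theorem div_eq_add_of_mem_quadReps {n a x y : ℕ} (h : (a, a, x, y) ∈ quadReps n) :
    n / a = x + y := by
  obtain ⟨ha, -, -, -, h⟩ := mem_quadReps.1 h
  rw [← h, ← mul_add, Nat.mul_div_cancel_left _ ha]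

theorem sum_quadReps_filter_eq (φ : ℕ → ℕ → ℕ → ℕ → M) :
    ∑ ⟨a, b, x, y⟩ ∈ (quadReps n).filter (fun p => p.1 = p.2.1), φ a b x y =
      ∑ d ∈ n.divisors, ∑ x ∈ Ioo 0 (n / d), φ d d x (n / d - x) := by
  rw [sum_sigma']
  refine sum_nbij' (fun ⟨a, _, x, _⟩ => ⟨a, x⟩) (fun ⟨d, x⟩ => (d, d, x, n / d - x))
    ?_ ?_ ?_ (fun _ _ => rfl) ?_
  · rintro ⟨a, b, x, y⟩ h
    obtain ⟨h, hab : a = b⟩ := mem_filter.1 h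
    subst hab
    have hq := div_eq_add_of_mem_quadReps h
    obtain ⟨ha, -, hx, hy, h⟩ := mem_quadReps.1 h
    simp only [mem_sigma, Nat.mem_divisors, mem_Ioo, hq]
    exact ⟨⟨⟨x + y, by rw [← h, mul_add]⟩, by rw [← h]; positivity⟩, hx, by omega⟩
  · rintro ⟨d, x⟩ h
    simp only [mem_sigma, Nat.mem_divisors, mem_Ioo] at h
    obtain ⟨⟨hdvd, hn⟩, hx, hxq⟩ := h
    have hd := Nat.pos_of_dvd_of_pos hdvd (Nat.pos_of_ne_zero hn)
    rw [mem_filter, mem_quadReps]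
    refine ⟨⟨hd, hd, hx, by omega, ?_⟩, rfl⟩
    rw [← mul_add, Nat.add_sub_cancel' hxq.le, Nat.mul_div_cancel' hdvd]
  all_goals
    rintro ⟨a, b, x, y⟩ h
    obtain ⟨h, hab : a = b⟩ := mem_filter.1 h
    subst hab
    simp only [div_eq_add_of_mem_quadReps h, Nat.add_sub_cancel_left]

theorem sum_quadReps_eq (φ : ℕ → ℕ → ℕ → ℕ → M) :
    ∑ ⟨a, b, x, y⟩ ∈ quadReps n, φ a b x y =
      ∑ ⟨a, b, x, y⟩ ∈ quadRepsGt n, (φ a b x y + φ b a y x) +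
        ∑ d ∈ n.divisors, ∑ x ∈ Ioo 0 (n / d), φ d d x (n / d - x) := by
  rw [sum_add_distrib, ← sum_quadReps_filter_lt, ← sum_quadReps_filter_eq, quadRepsGt,
    add_right_comm, add_assoc, ← sum_filter_add_sum_filter_not _ (fun p => p.2.1 < p.1)]
  congr 1
  rw [← sum_filter_add_sum_filter_not _ (fun p => p.1 < p.2.1), filter_filter, filter_filter,
    add_comm]
  congr 2 <;> exact filter_congr fun _ _ => by omega

theorem involution_mem_quadRepsGt {n a b x y : ℕ} (h : (a, b, x, y) ∈ quadRepsGt n) :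
    (x + y, x, b, a - b) ∈ quadRepsGt n := by
  obtain ⟨⟨ha, hb, hx, hy, h⟩, hba⟩ := mem_quadRepsGt.1 h
  refine mem_quadRepsGt.2 ⟨⟨by omega, hx, hb, by omega, ?_⟩, by omega⟩
  rw [← h]
  zify [hba.le]
  ring

theorem sum_quadRepsGt_involution (φ : ℕ → ℕ → ℕ → ℕ → M) :
    ∑ ⟨a, b, x, y⟩ ∈ quadRepsGt n, φ (x + y) x b (a - b) =
      ∑ ⟨a, b, x, y⟩ ∈ quadRepsGt n, φ a b x y := by
  refine sum_nbij' (fun ⟨a, b, x, y⟩ => (x + y, x, b, a - b))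
    (fun ⟨a, b, x, y⟩ => (x + y, x, b, a - b)) ?_ ?_ ?_ ?_ (fun _ _ => rfl) <;>
  rintro ⟨a, b, x, y⟩ h
  iterate 2 exact involution_mem_quadRepsGt h
  all_goals
    obtain ⟨-, hba⟩ := mem_quadRepsGt.1 h
    simp only [Prod.mk.injEq, true_and]
    omega

theorem sum_quadReps_eq_sum_divisorsAntidiagonal (φ : ℕ → ℕ → ℕ → ℕ → M) :
    ∑ ⟨a, b, x, y⟩ ∈ quadReps n, φ a b x y =
      ∑ m ∈ Ioo 0 n, ∑ ⟨a, x⟩ ∈ m.divisorsAntidiagonal,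
        ∑ ⟨b, y⟩ ∈ (n - m).divisorsAntidiagonal, φ a b x y := by
  simp only [← sum_product', sum_sigma']
  refine sum_nbij' (fun ⟨a, b, x, y⟩ => ⟨a * x, (a, x), (b, y)⟩)
    (fun ⟨_, (a, x), (b, y)⟩ => (a, b, x, y)) ?_ ?_ (fun _ _ => rfl) ?_ (fun _ _ => rfl)
  · rintro ⟨a, b, x, y⟩ h
    obtain ⟨ha, hb, hx, hy, h⟩ := mem_quadReps.1 h
    have := Nat.mul_pos ha hx
    have := Nat.mul_pos hb hy
    simp only [mem_sigma, mem_Ioo, mem_product, Nat.mem_divisorsAntidiagonal, true_and]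
    omega
  · rintro ⟨m, ⟨a, x⟩, ⟨b, y⟩⟩ h
    simp only [mem_sigma, mem_Ioo, mem_product, Nat.mem_divisorsAntidiagonal] at h
    obtain ⟨⟨hm, hmn⟩, ⟨rfl, -⟩, hby, -⟩ := h
    obtain ⟨ha, hx⟩ := CanonicallyOrderedAdd.mul_pos.1 hm
    obtain ⟨hb, hy⟩ := CanonicallyOrderedAdd.mul_pos.1 (hby ▸ Nat.sub_pos_of_lt hmn)
    exact mem_quadReps.2 ⟨ha, hb, hx, hy, by omega⟩
  · rintro ⟨m, ⟨a, x⟩, ⟨b, y⟩⟩ h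
    obtain ⟨-, ⟨rfl, -⟩, -⟩ := by
      simpa only [mem_sigma, mem_product, Nat.mem_divisorsAntidiagonal] using h
    rfl

theorem sum_quadReps_eq_sum_divisors (φ : ℕ → ℕ → ℕ → ℕ → M) :
    ∑ ⟨a, b, x, y⟩ ∈ quadReps n, φ a b x y =
      ∑ m ∈ Ioo 0 n, ∑ a ∈ m.divisors, ∑ b ∈ (n - m).divisors, φ a b (m / a) ((n - m) / b) := by
  rw [sum_quadReps_eq_sum_divisorsAntidiagonal]
  refine sum_congr rfl fun m _ => ?_
  rw [← Nat.sum_divisorsAntidiagonal fun a x => ∑ b ∈ (n - m).divisors, φ a b x ((n - m) / b)]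
  exact sum_congr rfl fun _ _ => Nat.sum_divisorsAntidiagonal fun b y => φ _ b _ y

end QuadReps

theorem liouville_identity {R : Type*} [CommRing R] (n : ℕ) (f h : R → R → R)
    (hfh : ∀ a b, f a b + f b a = h a b + h b a - h b (a - b) - h (a - b) b) :
    ∑ m ∈ Ioo 0 n, ∑ a ∈ m.divisors, ∑ b ∈ (n - m).divisors, f a b =
      ∑ d ∈ n.divisors, ∑ x ∈ Ioo 0 (n / d), (f d d - h d d + h x ((n / d : ℕ) - x)) := by
  have hconv := sum_quadReps_eq_sum_divisors n fun (a b _ _ : ℕ) => f a b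
  have hf := sum_quadReps_eq n fun (a b _ _ : ℕ) => f a b
  have hA := sum_quadReps_eq n fun (a b _ _ : ℕ) => h a b
  have hX := sum_quadReps_eq n fun (_ _ x y : ℕ) => h x y
  have hswap := sum_quadReps_swap n fun (a b _ _ : ℕ) => h a b
  have hinv := sum_quadRepsGt_involution n fun (_ _ x y : ℕ) => h x y + h y x
  have hU : ∑ ⟨a, b, _, _⟩ ∈ quadRepsGt n, (f a b + f b a) =
      ∑ ⟨a, b, _, _⟩ ∈ quadRepsGt n, (h a b + h b a - (h b ↑(a - b) + h ↑(a - b) b)) := by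
    refine sum_congr rfl fun ⟨a, b, _, _⟩ hp => ?_
    dsimp only
    rw [Nat.cast_sub (mem_quadRepsGt.1 hp).2.le, hfh]
    ring
  have hdiag : ∀ d ∈ n.divisors, ∑ x ∈ Ioo 0 (n / d), h x ↑(n / d - x) =
      ∑ x ∈ Ioo 0 (n / d), h x ((n / d : ℕ) - x) :=
    fun d _ => sum_congr rfl fun x hx => by rw [Nat.cast_sub (mem_Ioo.1 hx).2.le]
  simp only [sum_sub_distrib] at hconv hf hA hX hswap hinv hU
  rw [sum_congr rfl hdiag] at hX
  simp only [sum_add_distrib, sum_sub_distrib]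
  linear_combination -hconv + hf + hU - hA - hinv + hX - hswap

section PowerSums

variable {K : Type*} [Field K] [CharZero K]

theorem sum_range_cast_id (q : ℕ) : ∑ x ∈ range q, (x : K) = (q ^ 2 - q) / 2 := by
  induction q with
  | zero => simp
  | succ q ih => rw [sum_range_succ, ih]; push_cast; ring

theorem sum_range_cast_sq (q : ℕ) :
    ∑ x ∈ range q, (x : K) ^ 2 = (2 * q ^ 3 - 3 * q ^ 2 + q) / 6 := by
  induction q with
  | zero => simp
  | succ q ih => rw [sum_range_succ, ih]; push_cast; ring

theorem sum_range_cast_pow_three (q : ℕ) :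
    ∑ x ∈ range q, (x : K) ^ 3 = (q ^ 4 - 2 * q ^ 3 + q ^ 2) / 4 := by
  induction q with
  | zero => simp
  | succ q ih => rw [sum_range_succ, ih]; push_cast; ring

theorem sum_range_cast_pow_four (q : ℕ) :
    ∑ x ∈ range q, (x : K) ^ 4 = (6 * q ^ 5 - 15 * q ^ 4 + 10 * q ^ 3 - q) / 30 := by
  induction q with
  | zero => simp
  | succ q ih => rw [sum_range_succ, ih]; push_cast; ring

theorem sum_Ioo_zero_eq_sum_range {M : Type*} [AddCommMonoid M] {g : ℕ → M} (hg : g 0 = 0)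
    (q : ℕ) : ∑ x ∈ Ioo 0 q, g x = ∑ x ∈ range q, g x := by
  refine sum_subset (fun x hx => by simp only [mem_Ioo, mem_range] at hx ⊢; omega)
    fun x hx hx' => ?_
  obtain rfl : x = 0 := by simp only [mem_Ioo, mem_range] at hx hx'; omega
  exact hg

theorem sum_Ioo_mul_sub (q : ℕ) : ∑ x ∈ Ioo 0 q, (x : K) * (q - x) = (q ^ 3 - q) / 6 := by
  rw [sum_Ioo_zero_eq_sum_range (by simp),
    sum_congr rfl fun (x : ℕ) _ => show (x : K) * (q - x) = q * x - x ^ 2 by ring,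
    sum_sub_distrib, ← mul_sum, sum_range_cast_id, sum_range_cast_sq]
  ring

theorem sum_Ioo_mul_sub_sq (q : ℕ) :
    ∑ x ∈ Ioo 0 q, ((x : K) * (q - x)) ^ 2 = (q ^ 5 - q) / 30 := by
  rw [sum_Ioo_zero_eq_sum_range (by simp), sum_congr rfl fun (x : ℕ) _ =>
    show ((x : K) * (q - x)) ^ 2 = q ^ 2 * x ^ 2 - 2 * q * x ^ 3 + x ^ 4 by ring]
  simp only [sum_add_distrib, sum_sub_distrib, ← mul_sum, sum_range_cast_sq,
    sum_range_cast_pow_three, sum_range_cast_pow_four]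
  ring

end PowerSums

theorem sum_Ioo_const {R : Type*} [Ring R] {q : ℕ} (hq : 0 < q) (c : R) :
    ∑ _x ∈ Ioo 0 q, c = ((q : R) - 1) * c := by
  rw [sum_const, Nat.card_Ioo, nsmul_eq_mul, Nat.sub_zero, Nat.cast_pred hq]

theorem sum_divisors_add_div {M : Type*} [AddCommMonoid M] (n : ℕ) (A B : ℕ → M) :
    ∑ d ∈ n.divisors, (A (n / d) + B d) = ∑ d ∈ n.divisors, (A d + B d) := by
  rw [sum_add_distrib, Nat.sum_div_divisors, sum_add_distrib]

theorem cast_mul_div_of_mem_divisors {R : Type*} [Semiring R] {n d : ℕ} (hd : d ∈ n.divisors) :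
    (d : R) * (n / d : ℕ) = n := by
  rw [← Nat.cast_mul, Nat.mul_div_cancel' (Nat.dvd_of_mem_divisors hd)]

theorem sum_sigmaQ_one_mul_sigmaQ_one (n : ℕ) :
    ∑ m ∈ Ioo 0 n, sigmaQ 1 m * sigmaQ 1 (n - m) =
      5 / 12 * sigmaQ 3 n + (1 / 12 - n / 2) * sigmaQ 1 n := by
  calc ∑ m ∈ Ioo 0 n, sigmaQ 1 m * sigmaQ 1 (n - m)
      = ∑ m ∈ Ioo 0 n, ∑ a ∈ m.divisors, ∑ b ∈ (n - m).divisors, (a : ℚ) * b := by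
        simp only [sigmaQ, pow_one, sum_mul_sum]
    _ = ∑ d ∈ n.divisors, ∑ x ∈ Ioo 0 (n / d),
          ((((n / d : ℕ) : ℚ) ^ 2 - d ^ 2) / 2 - 1 / 2 * (x * ((n / d : ℕ) - x))) := by
        rw [liouville_identity n (fun a b => a * b) (fun a b => (a ^ 2 + a * b + b ^ 2) / 2)
          fun a b => by ring]
        exact sum_congr rfl fun d _ => sum_congr rfl fun x _ => by ring
    _ = ∑ d ∈ n.divisors, ((5 / 12 * ((n / d : ℕ) : ℚ) ^ 3 - ((n / d : ℕ) : ℚ) ^ 2 / 2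
          + ((n / d : ℕ) : ℚ) / 12) + ((d : ℚ) ^ 2 / 2 - n * d / 2)) := by
        refine sum_congr rfl fun d hd => ?_
        have hq := Nat.div_pos (Nat.divisor_le hd) (Nat.pos_of_mem_divisors hd)
        have hdq := cast_mul_div_of_mem_divisors (R := ℚ) hd
        rw [sum_sub_distrib, ← mul_sum, sum_Ioo_const hq, sum_Ioo_mul_sub]
        linear_combination (-(d : ℚ) / 2) * hdq
    _ = ∑ d ∈ n.divisors, ((5 / 12 * (d : ℚ) ^ 3 - (d : ℚ) ^ 2 / 2 + (d : ℚ) / 12)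
          + ((d : ℚ) ^ 2 / 2 - n * d / 2)) :=
        sum_divisors_add_div n (fun q => 5 / 12 * (q : ℚ) ^ 3 - (q : ℚ) ^ 2 / 2 + (q : ℚ) / 12)
          fun d => (d : ℚ) ^ 2 / 2 - n * d / 2
    _ = 5 / 12 * sigmaQ 3 n + (1 / 12 - n / 2) * sigmaQ 1 n := by
        simp only [sigmaQ, mul_sum, ← sum_add_distrib]
        exact sum_congr rfl fun d _ => by ring

theorem sum_sigmaQ_one_mul_sigmaQ_three (n : ℕ) :
    ∑ m ∈ Ioo 0 n, sigmaQ 1 m * sigmaQ 3 (n - m) =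
      7 / 80 * sigmaQ 5 n + (1 / 24 - n / 8) * sigmaQ 3 n - 1 / 240 * sigmaQ 1 n := by
  calc ∑ m ∈ Ioo 0 n, sigmaQ 1 m * sigmaQ 3 (n - m)
      = ∑ m ∈ Ioo 0 n, ∑ a ∈ m.divisors, ∑ b ∈ (n - m).divisors, (a : ℚ) * b ^ 3 := by
        simp only [sigmaQ, pow_one, sum_mul_sum]
    _ = ∑ d ∈ n.divisors, ∑ x ∈ Ioo 0 (n / d),
          ((((n / d : ℕ) : ℚ) ^ 4 - d ^ 4) / 8 - ((n / d : ℕ) : ℚ) ^ 2 / 4 * (x * ((n / d : ℕ) - x))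
            + 1 / 8 * (x * ((n / d : ℕ) - x)) ^ 2) := by
        rw [liouville_identity n (fun a b => a * b ^ 3)
          (fun a b => (a ^ 2 + a * b + b ^ 2) ^ 2 / 8) fun a b => by ring]
        exact sum_congr rfl fun d _ => sum_congr rfl fun x _ => by ring
    _ = ∑ d ∈ n.divisors, ((7 / 80 * ((n / d : ℕ) : ℚ) ^ 5 - ((n / d : ℕ) : ℚ) ^ 4 / 8
          + ((n / d : ℕ) : ℚ) ^ 3 / 24 - ((n / d : ℕ) : ℚ) / 240)
          + ((d : ℚ) ^ 4 / 8 - n * d ^ 3 / 8)) := by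
        refine sum_congr rfl fun d hd => ?_
        have hq := Nat.div_pos (Nat.divisor_le hd) (Nat.pos_of_mem_divisors hd)
        have hdq := cast_mul_div_of_mem_divisors (R := ℚ) hd
        rw [sum_add_distrib, sum_sub_distrib, ← mul_sum, ← mul_sum, sum_Ioo_const hq,
          sum_Ioo_mul_sub, sum_Ioo_mul_sub_sq]
        linear_combination (-(d : ℚ) ^ 3 / 8) * hdq
    _ = ∑ d ∈ n.divisors, ((7 / 80 * (d : ℚ) ^ 5 - (d : ℚ) ^ 4 / 8 + (d : ℚ) ^ 3 / 24
          - (d : ℚ) / 240) + ((d : ℚ) ^ 4 / 8 - n * d ^ 3 / 8)) :=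
        sum_divisors_add_div n
          (fun q => 7 / 80 * (q : ℚ) ^ 5 - (q : ℚ) ^ 4 / 8 + (q : ℚ) ^ 3 / 24 - (q : ℚ) / 240)
          fun d => (d : ℚ) ^ 4 / 8 - n * d ^ 3 / 8
    _ = 7 / 80 * sigmaQ 5 n + (1 / 24 - n / 8) * sigmaQ 3 n - 1 / 240 * sigmaQ 1 n := by
        simp only [sigmaQ, mul_sum, ← sum_add_distrib, ← sum_sub_distrib]
        exact sum_congr rfl fun d _ => by ring

theorem two_mul_sum_Ioo_sub_mul {R : Type*} [CommRing R] (n : ℕ) (g : ℕ → R) :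
    2 * ∑ m ∈ Ioo 0 n, ((n : R) - m) * (g m * g (n - m)) =
      n * ∑ m ∈ Ioo 0 n, g m * g (n - m) := by
  have hrefl : ∑ m ∈ Ioo 0 n, ((n : R) - m) * (g m * g (n - m)) =
      ∑ m ∈ Ioo 0 n, (m : R) * (g m * g (n - m)) := by
    refine sum_nbij' (n - ·) (n - ·) ?_ ?_ ?_ ?_ ?_ <;> intro m hm <;> rw [mem_Ioo] at hm
    · rw [mem_Ioo]; omega
    · rw [mem_Ioo]; omega
    · omega
    · omega
    · rw [Nat.sub_sub_self hm.2.le, Nat.cast_sub hm.2.le]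
      ring
  rw [two_mul]
  nth_rewrite 2 [hrefl]
  rw [← sum_add_distrib, mul_sum]
  exact sum_congr rfl fun m _ => by ring

theorem triple_convolution_sigma1_general (d : ℕ) :
    ∑ d₁ ∈ Finset.Ioo 0 d, ∑ d₂ ∈ Finset.Ioo 0 (d - d₁),
        sigmaQ 1 d₁ * sigmaQ 1 d₂ * sigmaQ 1 (d - d₁ - d₂) =
      ((d : ℚ) ^ 2 / 8 - (d : ℚ) / 16 + 1 / 192) * sigmaQ 1 d +
        (-5 * (d : ℚ) / 32 + 5 / 96) * sigmaQ 3 d + (7 / 192) * sigmaQ 5 d := by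
  have inner : ∀ m ∈ Ioo 0 d,
      ∑ d₂ ∈ Ioo 0 (d - m), sigmaQ 1 m * sigmaQ 1 d₂ * sigmaQ 1 (d - m - d₂) =
      5 / 12 * (sigmaQ 1 m * sigmaQ 3 (d - m)) + 1 / 12 * (sigmaQ 1 m * sigmaQ 1 (d - m))
        - 1 / 2 * (((d : ℚ) - m) * (sigmaQ 1 m * sigmaQ 1 (d - m))) := by
    intro m hm
    simp only [mul_assoc, ← mul_sum, sum_sigmaQ_one_mul_sigmaQ_one,
      Nat.cast_sub (mem_Ioo.1 hm).2.le]
    ring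
  rw [sum_congr rfl inner]
  simp only [sum_add_distrib, sum_sub_distrib, ← mul_sum]
  linear_combination 5 / 12 * sum_sigmaQ_one_mul_sigmaQ_three d
    + (1 / 12 - (d : ℚ) / 4) * sum_sigmaQ_one_mul_sigmaQ_one d
    - 1 / 4 * two_mul_sum_Ioo_sub_mul d (sigmaQ 1)

/-- `∑_{d₁+d₂+d₃=d, dᵢ≥1} σ₁(d₁)σ₁(d₂)σ₁(d₃)
      = (d²/8 - d/16 + 1/192)·σ₁(d) + (-5d/32 + 5/96)·σ₃(d) + (7/192)·σ₅(d)`. -/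
theorem triple_convolution_sigma1 (d : ℕ) (hd : 0 < d) :
    ∑ d₁ ∈ Finset.Ioo 0 d, ∑ d₂ ∈ Finset.Ioo 0 (d - d₁),
        sigmaQ 1 d₁ * sigmaQ 1 d₂ * sigmaQ 1 (d - d₁ - d₂) =
      ((d : ℚ) ^ 2 / 8 - (d : ℚ) / 16 + 1 / 192) * sigmaQ 1 d +
        (-5 * (d : ℚ) / 32 + 5 / 96) * sigmaQ 3 d + (7 / 192) * sigmaQ 5 d :=
  triple_convolution_sigma1_general d
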